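/- arXiv:1709.00582 — 5 statements merged into one kernel-verified Lean document; each statement's English description precedes it below -/
import Mathlib

section
/- Conditional ghost-connection probabilities and their independence (finite-graph version of Proposition 3.2 and of Proposition B in the Appendix): for every ω̃ ∈ {0,1}^E and every finite collection C_1, …, C_m of pairwise distinct clusters of ω̃, under P̂_{J,H} conditioned on {ω|_E = ω̃} one has P̂_{J,H}( C_j ↔ g for all j = 1,…,m | ω|_E = ω̃ ) = ∏_{j=1}^m tanh(H(C_j)); in particular the events {C_j ↔ g} are (conditionally) mutually independent, each with probability tanh(H(C_j)). -/
open scoped Classical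

namespace FK

variable {V : Type*} [Fintype V] [DecidableEq V]

/-- Internal bond configurations on the edge set `E`. -/
abbrev Config (E : Finset (Sym2 V)) : Type _ := {e : Sym2 V // e ∈ E} → Bool

/-- Full bond configurations: internal edges together with the ghost edges
(one for each vertex). -/
abbrev GConfig (E : Finset (Sym2 V)) : Type _ := Config E × (V → Bool)

/-- Two vertices are adjacent if they are distinct and joined by an open internal edge. -/
def adj (E : Finset (Sym2 V)) (ω : Config E) (u v : V) : Prop :=
  u ≠ v ∧ ∃ h : s(u, v) ∈ E, ω ⟨s(u, v), h⟩ = true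

/-- The same-cluster relation of an internal configuration. -/
def conn (E : Finset (Sym2 V)) (ω : Config E) (u v : V) : Prop :=
  Relation.ReflTransGen (adj E ω) u v

/-- The cluster of a vertex. -/
noncomputable def cluster (E : Finset (Sym2 V)) (ω : Config E) (v : V) : Finset V :=
  Finset.univ.filter (fun u => conn E ω v u)

/-- The set of clusters (connected components) of an internal configuration. -/
noncomputable def clusters (E : Finset (Sym2 V)) (ω : Config E) : Finset (Finset V) :=
  Finset.univ.image (cluster E ω)

/-- Adjacency in the extended graph, where `none` is the ghost vertex `g`. -/
def adjG (E : Finset (Sym2 V)) (ω : GConfig E) : Option V → Option V → Prop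
  | some u, some v => adj E ω.1 u v
  | some u, none => ω.2 u = true
  | none, some v => ω.2 v = true
  | none, none => False

/-- Connectivity in the extended graph (with the ghost vertex `none`). -/
def connG (E : Finset (Sym2 V)) (ω : GConfig E) (x y : Option V) : Prop :=
  Relation.ReflTransGen (adjG E ω) x y

/-- Number of connected components of the extended graph not containing the ghost. -/
noncomputable def kGhost (E : Finset (Sym2 V)) (ω : GConfig E) : ℕ :=
  (((Finset.univ : Finset V).filter (fun v => ¬ connG E ω (some v) none)).image
    (fun v => Finset.univ.filter (fun u : V => connG E ω (some v) (some u)))).card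

/-- The product over internal edges of the usual FK edge weights. -/
noncomputable def edgeWeight (J : Sym2 V → ℝ) (E : Finset (Sym2 V)) (ω : Config E) : ℝ :=
  ∏ e : {e : Sym2 V // e ∈ E},
    if ω e then 1 - Real.exp (-2 * J e.1) else Real.exp (-2 * J e.1)

/-- Unnormalized FK (q = 2) weight with ghost. -/
noncomputable def fkWeight (J : Sym2 V → ℝ) (H : V → ℝ) (E : Finset (Sym2 V))
    (ω : GConfig E) : ℝ :=
  2 ^ kGhost E ω * edgeWeight J E ω.1 *
    ∏ v, if ω.2 v then 1 - Real.exp (-2 * H v) else Real.exp (-2 * H v)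

/-- The FK (q = 2) random-cluster measure with ghost. -/
noncomputable def fkProb (J : Sym2 V → ℝ) (H : V → ℝ) (E : Finset (Sym2 V))
    (ω : GConfig E) : ℝ :=
  fkWeight J H E ω / ∑ ω' : GConfig E, fkWeight J H E ω'

/-- The marginal of the FK measure with ghost on the internal edges. -/
noncomputable def fkMarginal (J : Sym2 V → ℝ) (H : V → ℝ) (E : Finset (Sym2 V))
    (ωi : Config E) : ℝ :=
  ∑ ωg : V → Bool, fkProb J H E (ωi, ωg)

/-- Unnormalized zero-field random-cluster (q = 2) weight. -/
noncomputable def rcWeight (J : Sym2 V → ℝ) (E : Finset (Sym2 V)) (ω : Config E) : ℝ :=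
  2 ^ (clusters E ω).card * edgeWeight J E ω

/-- The zero-field random-cluster (q = 2) measure. -/
noncomputable def rcProb (J : Sym2 V → ℝ) (E : Finset (Sym2 V)) (ω : Config E) : ℝ :=
  rcWeight J E ω / ∑ ω' : Config E, rcWeight J E ω'

/-- The spin value (±1) of a Boolean. -/
def spin (b : Bool) : ℝ := if b then 1 else -1

/-- The product of the two spins at the endpoints of an (unordered) edge. -/
def pairSpin (σ : V → Bool) : Sym2 V → ℝ :=
  Sym2.lift ⟨fun u v => spin (σ u) * spin (σ v), fun u v => mul_comm _ _⟩

/-- Unnormalized Ising weight. -/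
noncomputable def isingWeight (J : Sym2 V → ℝ) (H : V → ℝ) (E : Finset (Sym2 V))
    (σ : V → Bool) : ℝ :=
  Real.exp ((∑ e ∈ E, J e * pairSpin σ e) + ∑ v, H v * spin (σ v))

/-- The Ising Gibbs measure. -/
noncomputable def isingProb (J : Sym2 V → ℝ) (H : V → ℝ) (E : Finset (Sym2 V))
    (σ : V → Bool) : ℝ :=
  isingWeight J H E σ / ∑ σ' : V → Bool, isingWeight J H E σ'

/-- Unnormalized Edwards–Sokal weight on pairs (spin configuration, bond configuration
with ghost); the ghost spin is `+1` (i.e. `true`). -/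
noncomputable def esWeight (J : Sym2 V → ℝ) (H : V → ℝ) (E : Finset (Sym2 V))
    (p : (V → Bool) × GConfig E) : ℝ :=
  (∏ e : {e : Sym2 V // e ∈ E},
      if p.2.1 e then
        (if ∀ u ∈ e.1, ∀ v ∈ e.1, p.1 u = p.1 v then 1 - Real.exp (-2 * J e.1) else 0)
      else Real.exp (-2 * J e.1))
  * ∏ v, if p.2.2 v then (if p.1 v = true then 1 - Real.exp (-2 * H v) else 0)
         else Real.exp (-2 * H v)

/-- The Edwards–Sokal coupling measure. -/
noncomputable def esProb (J : Sym2 V → ℝ) (H : V → ℝ) (E : Finset (Sym2 V))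
    (p : (V → Bool) × GConfig E) : ℝ :=
  esWeight J H E p / ∑ p' : (V → Bool) × GConfig E, esWeight J H E p'

end FK

/-! Fix the internal configuration `ω̃`. The ghost edges are independent under the edge weights,
and `2 ^ k` factorises over the clusters of `ω̃`: a cluster contributes a factor `2` exactly when
none of its ghost edges is open. So the conditional law of the ghost edges is a product over
clusters, and the ghost edges of a cluster `D` carry total weight `1 + exp (-2 H(D))`, of which
`1 - exp (-2 H(D))` comes from configurations joining `D` to the ghost. The ratio is
`tanh H(D)`. -/

open Finset

theorem sum_ite_forall_eq_false_mul_prod {κ R : Type*} [Fintype κ] [DecidableEq κ] [CommRing R]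
    (g : κ → Bool → R) (t : R) :
    ∑ b : κ → Bool, (if ∀ u, b u = false then t else 1) * ∏ u, g u (b u)
      = ∏ u, (g u true + g u false) + (t - 1) * ∏ u, g u false := by
  have hsplit : ∀ b : κ → Bool,
      (if ∀ u, b u = false then t else 1) = 1 + if b = fun _ => false then t - 1 else 0 := by
    intro b
    simp only [funext_iff]
    split_ifs <;> ring
  simp only [hsplit, add_mul, one_mul, ite_mul, zero_mul, sum_add_distrib, Fintype.sum_ite_eq']
  rw [← Fintype.prod_sum]
  simp only [Fintype.sum_bool]

section FiberSums

variable {α ι : Type*} [Fintype α] [DecidableEq α] [Fintype ι] [DecidableEq ι]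

def piFiberEquiv (c : α → ι) (β : Type*) : (α → β) ≃ ∀ i, {a // c a = i} → β where
  toFun ω _ a := ω a
  invFun x a := x (c a) ⟨a, rfl⟩
  left_inv _ := rfl
  right_inv x := by
    funext i ⟨a, ha⟩
    subst ha
    rfl

theorem sum_prod_fiber {β R : Type*} [Fintype β] [CommSemiring R] (c : α → ι)
    (F : ∀ i, ({a // c a = i} → β) → R) :
    ∑ ω : α → β, ∏ i, F i (fun a => ω a) = ∏ i, ∑ b, F i b := by
  rw [Fintype.prod_sum]
  exact Fintype.sum_equiv (piFiberEquiv c β) _ _ fun _ => rfl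

theorem sum_prod_ite_fiber {R : Type*} [CommRing R] (c : α → ι) (g : α → Bool → R) (t : ι → R) :
    ∑ ω : α → Bool, (∏ i, if ∀ a, c a = i → ω a = false then t i else 1) * ∏ a, g a (ω a)
      = ∏ i, (∏ a with c a = i, (g a true + g a false) +
          (t i - 1) * ∏ a with c a = i, g a false) := by
  let F i (b : {a // c a = i} → Bool) : R :=
    (if ∀ a, b a = false then t i else 1) * ∏ a, g a.1 (b a)
  have hfactor : ∀ ω : α → Bool,
      (∏ i, if ∀ a, c a = i → ω a = false then t i else 1) * ∏ a, g a (ω a)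
        = ∏ i, F i (fun a => ω a) := by
    intro ω
    rw [← Fintype.prod_fiberwise c (fun a => g a (ω a)), ← prod_mul_distrib]
    simp only [F, Subtype.forall]
  rw [Fintype.sum_congr _ _ hfactor, sum_prod_fiber]
  refine Fintype.prod_congr _ _ fun i => ?_
  have hfiber (f : α → R) : ∏ a with c a = i, f a = ∏ a : {a // c a = i}, f a :=
    prod_subtype _ (by simp) f
  rw [hfiber, hfiber]
  exact sum_ite_forall_eq_false_mul_prod (fun a : {a // c a = i} => g a.1) (t i)

end FiberSums

theorem Real.tanh_eq_one_sub_exp_div (y : ℝ) :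
    Real.tanh y = (1 - Real.exp (-2 * y)) / (1 + Real.exp (-2 * y)) := by
  rw [Real.tanh_eq, show -2 * y = -y + -y by ring, Real.exp_add, Real.exp_neg]
  field_simp

theorem prod_ite_div_prod_eq_prod_tanh {ι : Type*} [Fintype ι] [DecidableEq ι]
    (S : Finset ι) (y : ι → ℝ) :
    (∏ i, if i ∈ S then 1 - Real.exp (-2 * y i) else 1 + Real.exp (-2 * y i))
      / ∏ i, (1 + Real.exp (-2 * y i)) = ∏ i ∈ S, Real.tanh (y i) := by
  rw [← prod_div_distrib, ← Fintype.prod_ite_mem S]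
  refine Fintype.prod_congr _ _ fun i => ?_
  split_ifs
  · exact (Real.tanh_eq_one_sub_exp_div _).symm
  · exact div_self (by positivity)

namespace FK

variable {V : Type*} {E : Finset (Sym2 V)}

theorem adj_symm {ω : Config E} {u v : V} (h : adj E ω u v) : adj E ω v u := by
  obtain ⟨hne, he, hω⟩ := h
  refine ⟨hne.symm, ?_⟩
  rw [Sym2.eq_swap]
  exact ⟨he, hω⟩

theorem conn_symm {ω : Config E} {u v : V} (h : conn E ω u v) : conn E ω v u :=
  Relation.ReflTransGen.mono (fun _ _ => adj_symm) _ _ (Relation.ReflTransGen.swap _ _ h)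

theorem connG_of_conn {ω : GConfig E} {u v : V} (h : conn E ω.1 u v) :
    connG E ω (some u) (some v) :=
  Relation.ReflTransGen.lift some (fun _ _ h => h) _ _ h

theorem connG_some_cases {ω : GConfig E} {v : V} {y : Option V}
    (h : connG E ω (some v) y) :
    (∃ u, conn E ω.1 v u ∧ y = some u) ∨ ∃ u, conn E ω.1 v u ∧ ω.2 u = true := by
  induction h with
  | refl => exact .inl ⟨v, .refl, rfl⟩
  | @tail x z _ hxz ih =>
    rcases ih with ⟨u, hu, rfl⟩ | hghost
    · cases z with
      | none => exact .inr ⟨u, hu, hxz⟩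
      | some w => exact .inl ⟨w, hu.tail hxz, rfl⟩
    · exact .inr hghost

theorem connG_none_iff {ω : GConfig E} {v : V} :
    connG E ω (some v) none ↔ ∃ u, conn E ω.1 v u ∧ ω.2 u = true := by
  refine ⟨fun h => ?_, fun ⟨u, hu, hg⟩ => (connG_of_conn hu).tail hg⟩
  rcases connG_some_cases h with ⟨u, -, hu⟩ | hghost
  · cases hu
  · exact hghost

theorem connG_some_iff_of_not_connG_none {ω : GConfig E} {u v : V}
    (hv : ¬ connG E ω (some v) none) :
    connG E ω (some v) (some u) ↔ conn E ω.1 v u := by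
  refine ⟨fun h => ?_, connG_of_conn⟩
  rcases connG_some_cases h with ⟨w, hw, hwu⟩ | hghost
  · cases hwu
    exact hw
  · exact absurd (connG_none_iff.mpr hghost) hv

variable [Fintype V]

theorem cluster_eq_of_conn {ω : Config E} {u v : V} (h : conn E ω u v) :
    cluster E ω u = cluster E ω v := by
  ext w
  simp only [cluster, mem_filter, mem_univ, true_and]
  exact ⟨(conn_symm h).trans, h.trans⟩

theorem mem_cluster_iff_cluster_eq {ω : Config E} {u v : V} :
    u ∈ cluster E ω v ↔ cluster E ω u = cluster E ω v := by
  refine ⟨fun hu => cluster_eq_of_conn (conn_symm (mem_filter.mp hu).2), fun h => ?_⟩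
  rw [← h]
  exact mem_filter.mpr ⟨mem_univ u, Relation.ReflTransGen.refl⟩

theorem filter_connG_some_eq_cluster {ωi : Config E} {ωg : V → Bool} {v : V}
    (hv : ¬ connG E (ωi, ωg) (some v) none) :
    ({u | connG E (ωi, ωg) (some v) (some u)} : Finset V) = cluster E ωi v := by
  ext u
  simp [cluster, connG_some_iff_of_not_connG_none hv]

variable [DecidableEq V]

theorem sum_ghost_weights {ι : Type*} [Fintype ι] [DecidableEq ι] (H : V → ℝ) (c : V → ι)
    (t : ι → ℝ) :
    ∑ ωg : V → Bool, (∏ i, if ∀ v, c v = i → ωg v = false then t i else 1) *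
        ∏ v, (if ωg v then 1 - Real.exp (-2 * H v) else Real.exp (-2 * H v))
      = ∏ i, (1 + (t i - 1) * Real.exp (-2 * ∑ v with c v = i, H v)) := by
  rw [sum_prod_ite_fiber c fun v b => if b then 1 - Real.exp (-2 * H v) else Real.exp (-2 * H v)]
  simp [← Real.exp_sum, mul_sum]

noncomputable def clusterLabel (ω : Config E) (v : V) : clusters E ω :=
  ⟨cluster E ω v, mem_image_of_mem _ (mem_univ v)⟩

theorem clusterLabel_eq_iff {ω : Config E} {v : V} {D : clusters E ω} :
    clusterLabel ω v = D ↔ v ∈ D.1 := by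
  obtain ⟨D, hD⟩ := D
  obtain ⟨w, -, rfl⟩ := mem_image.mp hD
  rw [Subtype.ext_iff, mem_cluster_iff_cluster_eq]
  rfl

theorem filter_clusterLabel_eq {ω : Config E} (D : clusters E ω) :
    ({v | clusterLabel ω v = D} : Finset V) = D.1 := by
  ext v
  simp [clusterLabel_eq_iff]

theorem clusterLabel_surjective (ω : Config E) : Function.Surjective (clusterLabel ω) := by
  rintro ⟨D, hD⟩
  obtain ⟨v, -, rfl⟩ := mem_image.mp hD
  exact ⟨v, rfl⟩

theorem clusterLabel_eq_clusterLabel_iff {ω : Config E} {u v : V} :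
    clusterLabel ω u = clusterLabel ω v ↔ conn E ω v u := by
  rw [clusterLabel_eq_iff]
  simp [clusterLabel, cluster]

theorem not_connG_none_iff {ωi : Config E} {ωg : V → Bool} {v : V} :
    ¬ connG E (ωi, ωg) (some v) none ↔
      ∀ u, clusterLabel ωi u = clusterLabel ωi v → ωg u = false := by
  simp [connG_none_iff, clusterLabel_eq_clusterLabel_iff]

theorem kGhost_eq_card (ωi : Config E) (ωg : V → Bool) :
    kGhost E (ωi, ωg) = #{D : clusters E ωi | ∀ v, clusterLabel ωi v = D → ωg v = false} := by
  rw [kGhost, ← card_map (Function.Embedding.subtype _)]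
  congr 1
  ext D
  simp only [mem_image, mem_filter, mem_univ, true_and, mem_map, Function.Embedding.coe_subtype]
  constructor
  · rintro ⟨v, hv, rfl⟩
    exact ⟨clusterLabel ωi v, not_connG_none_iff.mp hv, (filter_connG_some_eq_cluster hv).symm⟩
  · rintro ⟨i, hi, rfl⟩
    obtain ⟨v, rfl⟩ := clusterLabel_surjective ωi i
    have hv := not_connG_none_iff.mpr hi
    exact ⟨v, hv, filter_connG_some_eq_cluster hv⟩

theorem exists_connG_none_iff {ωi : Config E} {ωg : V → Bool} {D : clusters E ωi} :
    (∃ v ∈ D.1, connG E (ωi, ωg) (some v) none) ↔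
      ¬ ∀ v, clusterLabel ωi v = D → ωg v = false := by
  constructor
  · rintro ⟨v, hv, hconn⟩ hfree
    refine not_connG_none_iff.mpr (fun u hu => hfree u ?_) hconn
    exact hu.trans (clusterLabel_eq_iff.mpr hv)
  · intro h
    obtain ⟨v, hv, hg⟩ := by simpa only [not_forall, exists_prop, Bool.not_eq_false] using h
    exact ⟨v, clusterLabel_eq_iff.mp hv, .single (by simpa [adjG] using hg)⟩

theorem fkProb_eq (J : Sym2 V → ℝ) (H : V → ℝ) (ωi : Config E) (ωg : V → Bool) :
    fkProb J H E (ωi, ωg) = edgeWeight J E ωi / (∑ ω, fkWeight J H E ω) *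
      ((∏ D, if ∀ v, clusterLabel ωi v = D → ωg v = false then 2 else 1) *
        ∏ v, if ωg v then 1 - Real.exp (-2 * H v) else Real.exp (-2 * H v)) := by
  rw [fkProb, fkWeight, kGhost_eq_card, ← prod_const, prod_filter]
  ring

theorem sum_fkProb_ite_forall_ghost (J : Sym2 V → ℝ) (H : V → ℝ) (ωi : Config E)
    (S : Finset (clusters E ωi)) :
    ∑ ωg : V → Bool, (if ∀ D ∈ S, ¬ ∀ v, clusterLabel ωi v = D → ωg v = false
        then fkProb J H E (ωi, ωg) else 0)
      = edgeWeight J E ωi / (∑ ω, fkWeight J H E ω) * ∏ D : clusters E ωi,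
          if D ∈ S then 1 - Real.exp (-2 * ∑ v ∈ D.1, H v)
          else 1 + Real.exp (-2 * ∑ v ∈ D.1, H v) := by
  -- Asking the clusters of `S` to reach the ghost turns the weight `2` of a ghost-free cluster
  -- of `S` into `0`.
  have hterm : ∀ ωg : V → Bool,
      (if ∀ D ∈ S, ¬ ∀ v, clusterLabel ωi v = D → ωg v = false
        then fkProb J H E (ωi, ωg) else 0)
      = edgeWeight J E ωi / (∑ ω, fkWeight J H E ω) *
        ((∏ D, if ∀ v, clusterLabel ωi v = D → ωg v = false
            then (if D ∈ S then 0 else 2) else 1) *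
          ∏ v, if ωg v then 1 - Real.exp (-2 * H v) else Real.exp (-2 * H v)) := by
    intro ωg
    rw [fkProb_eq]
    split_ifs with hS
    · congr 3 with D
      split_ifs with hfree hD <;> first | rfl | exact absurd hfree (hS D hD)
    · push Not at hS
      obtain ⟨D, hD, hfree⟩ := hS
      rw [prod_eq_zero (mem_univ D) (by rw [if_pos hfree, if_pos hD]), zero_mul, mul_zero]
  rw [Fintype.sum_congr _ _ hterm, ← mul_sum, sum_ghost_weights]
  congr 1
  refine Fintype.prod_congr _ _ fun D => ?_
  rw [filter_clusterLabel_eq]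
  split_ifs <;> ring

theorem fkMarginal_eq (J : Sym2 V → ℝ) (H : V → ℝ) (ωi : Config E) :
    fkMarginal J H E ωi = edgeWeight J E ωi / (∑ ω, fkWeight J H E ω) *
      ∏ D : clusters E ωi, (1 + Real.exp (-2 * ∑ v ∈ D.1, H v)) := by
  simpa [fkMarginal] using sum_fkProb_ite_forall_ghost J H ωi ∅

end FK

theorem fk_ghost_connection_conditional_general
    {V : Type*} [Fintype V] [DecidableEq V]
    (E : Finset (Sym2 V))
    (J : Sym2 V → ℝ)
    (H : V → ℝ)
    (ωi : FK.Config E) (hpos : 0 < FK.fkMarginal J H E ωi)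
    (m : ℕ) (C : Fin m → Finset V) (hinj : Function.Injective C)
    (hC : ∀ j, C j ∈ FK.clusters E ωi) :
    (∑ ωg : V → Bool,
        if ∀ j, ∃ v ∈ C j, FK.connG E (ωi, ωg) (some v) none
        then FK.fkProb J H E (ωi, ωg) else 0)
      / FK.fkMarginal J H E ωi
    = ∏ j, Real.tanh (∑ v ∈ C j, H v) := by
  let S : Finset (FK.clusters E ωi) := univ.image fun j => ⟨C j, hC j⟩
  have hevent : ∀ ωg : V → Bool, (∀ j, ∃ v ∈ C j, FK.connG E (ωi, ωg) (some v) none) ↔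
      ∀ D ∈ S, ¬ ∀ v, FK.clusterLabel ωi v = D → ωg v = false := by
    intro ωg
    simp only [S, mem_image, mem_univ, true_and, forall_exists_index, forall_apply_eq_imp_iff]
    exact forall_congr' fun j => FK.exists_connG_none_iff (D := ⟨C j, hC j⟩)
  rw [FK.fkMarginal_eq] at hpos ⊢
  rw [Fintype.sum_congr _ _ fun ωg => if_congr (hevent ωg) rfl rfl,
    FK.sum_fkProb_ite_forall_ghost, mul_div_mul_left _ _ (left_ne_zero_of_mul hpos.ne'),
    prod_ite_div_prod_eq_prod_tanh S fun D => ∑ v ∈ D.1, H v,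
    prod_image fun j _ k _ h => hinj (congrArg Subtype.val h)]

/-- conditional ghost-connection probabilities and their independence. -/
theorem fk_ghost_connection_conditional
    {V : Type*} [Fintype V] [DecidableEq V]
    (E : Finset (Sym2 V)) (hE : ∀ e ∈ E, ¬ e.IsDiag)
    (J : Sym2 V → ℝ) (hJ : ∀ e ∈ E, 0 ≤ J e)
    (H : V → ℝ) (hH : ∀ v, 0 ≤ H v)
    (ωi : FK.Config E) (hpos : 0 < FK.fkMarginal J H E ωi)
    (m : ℕ) (C : Fin m → Finset V) (hinj : Function.Injective C)
    (hC : ∀ j, C j ∈ FK.clusters E ωi) :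
    (∑ ωg : V → Bool,
        if ∀ j, ∃ v ∈ C j, FK.connG E (ωi, ωg) (some v) none
        then FK.fkProb J H E (ωi, ωg) else 0)
      / FK.fkMarginal J H E ωi
    = ∏ j, Real.tanh (∑ v ∈ C j, H v) :=
  fk_ghost_connection_conditional_general E J H ωi hpos m C hinj hC
end

section
/- Conditional spin distribution of clusters under the Edwards–Sokal coupling (finite-graph version of the spin part of Propositions 3.2 and B): for every ω̃ ∈ {0,1}^E and every finite collection C_1, …, C_m of pairwise distinct clusters of ω̃ with chosen representatives v_j ∈ C_j, under P̂^{ES}_{J,H} conditioned on {ω|_E = ω̃} one has P̂^{ES}_{J,H}( σ_{v_j} = +1 for all j = 1,…,m | ω|_E = ω̃ ) = ∏_{j=1}^m [ tanh(H(C_j)) + (1 - tanh(H(C_j)))/2 ]; in particular the events {σ_{v_j} = +1} are (conditionally) mutually independent, and P̂^{ES}_{J,H}( σ_{v_j} = -1 | ω|_E = ω̃ ) = (1 - tanh(H(C_j)))/2. -/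
open scoped Classical

/-!
Summing out the ghost bonds, the Edwards–Sokal weight of `(σ, ω̃)` becomes the FK edge weight
of `ω̃`, times the indicator that `σ` is constant on the clusters of `ω̃`, times
`∏ v, e^{-2 H v}` over the vertices with `σ v = -1`. Conditionally on `ω̃`, the spins of the
clusters are therefore independent, and a cluster `C` has spin `-1` with probability
`e^{-2 H(C)} / (1 + e^{-2 H(C)}) = (1 - tanh H(C)) / 2`.
-/

section ProductWeights

variable {ι β R : Type*} [Fintype ι] [DecidableEq ι] [Fintype β] [DecidableEq β]

theorem sum_ite_forall_mem_eq_prod [CommSemiring R] (G : ι → β → R) (S : Finset ι) (b : β) :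
    (∑ τ : ι → β, if ∀ q ∈ S, τ q = b then ∏ q, G q (τ q) else 0)
      = (∏ q ∈ S, G q b) * ∏ q ∈ Sᶜ, ∑ b', G q b' := by
  let t : ι → Finset β := fun q => if q ∈ S then {b} else Finset.univ
  have hpi : Fintype.piFinset t = Finset.univ.filter (fun τ : ι → β => ∀ q ∈ S, τ q = b) := by
    ext τ
    simp only [Fintype.mem_piFinset, Finset.mem_filter, Finset.mem_univ, true_and, t]
    refine forall_congr' fun q => ?_
    split_ifs <;> simp_all
  calc (∑ τ : ι → β, if ∀ q ∈ S, τ q = b then ∏ q, G q (τ q) else 0)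
      = ∑ τ ∈ Fintype.piFinset t, ∏ q, G q (τ q) := by rw [hpi, Finset.sum_filter]
    _ = ∏ q, ∑ b' ∈ t q, G q b' := (Finset.prod_univ_sum t G).symm
    _ = (∏ q ∈ S, G q b) * ∏ q ∈ Sᶜ, ∑ b', G q b' := by
      rw [← Finset.prod_mul_prod_compl S]
      congr 1 <;> refine Finset.prod_congr rfl fun q hq => ?_
      · simp [t, hq]
      · simp [t, Finset.mem_compl.mp hq]

theorem sum_ite_forall_mem_div_sum_prod [Field R] (G : ι → β → R) (hG : ∀ q, ∑ b', G q b' ≠ 0)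
    (S : Finset ι) (b : β) :
    (∑ τ : ι → β, if ∀ q ∈ S, τ q = b then ∏ q, G q (τ q) else 0) / ∑ τ : ι → β, ∏ q, G q (τ q)
      = ∏ q ∈ S, G q b / ∑ b', G q b' := by
  rw [sum_ite_forall_mem_eq_prod, ← Fintype.prod_sum, ← Finset.prod_mul_prod_compl S,
    mul_div_mul_right _ _ (Finset.prod_ne_zero_iff.mpr fun q _ => hG q), Finset.prod_div_distrib]

end ProductWeights

theorem Function.Surjective.sum_ite_factorsThrough {α Q β M : Type*} [Fintype α] [DecidableEq α]
    [Fintype Q] [DecidableEq Q] [Fintype β] [Nonempty β] [AddCommMonoid M] {π : α → Q}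
    (hπ : Function.Surjective π) (F : (α → β) → M) :
    ∑ σ : α → β, (if σ.FactorsThrough π then F σ else 0) = ∑ τ : Q → β, F (τ ∘ π) := by
  have himage : (Finset.univ : Finset (Q → β)).image (· ∘ π)
      = Finset.univ.filter (·.FactorsThrough π) := by
    ext σ
    simp [Function.factorsThrough_iff, eq_comm]
  rw [← Finset.sum_filter, ← himage, Finset.sum_image fun τ _ τ' _ h => hπ.injective_comp_right h]

namespace FK

variable {V : Type*}

def bondGraph (E : Finset (Sym2 V)) (ω : Config E) : SimpleGraph V where
  Adj := adj E ω
  symm := ⟨fun _ _ ⟨hne, he, hω⟩ => ⟨hne.symm, by rw [Sym2.eq_swap]; exact ⟨he, hω⟩⟩⟩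
  loopless := ⟨fun _ h => h.1 rfl⟩

section Clusters

variable (E : Finset (Sym2 V)) (ω : Config E)

theorem conn_iff_reachable {u w : V} : conn E ω u w ↔ (bondGraph E ω).Reachable u w :=
  (SimpleGraph.reachable_iff_reflTransGen (G := bondGraph E ω) u w).symm

theorem cluster_eq_filter [Fintype V] (v : V) :
    cluster E ω v = Finset.univ.filter (fun u =>
      (bondGraph E ω).connectedComponentMk u = (bondGraph E ω).connectedComponentMk v) := by
  ext u
  simp [cluster, conn_iff_reachable, SimpleGraph.ConnectedComponent.eq, SimpleGraph.reachable_comm]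

theorem eq_cluster_of_mem_clusters [Fintype V] [DecidableEq V] {C : Finset V}
    (hC : C ∈ clusters E ω) {v : V} (hv : v ∈ C) :
    C = cluster E ω v := by
  obtain ⟨w, -, rfl⟩ := Finset.mem_image.mp hC
  rw [cluster_eq_filter] at hv ⊢
  rw [cluster_eq_filter, (Finset.mem_filter.mp hv).2]

theorem forall_open_edge_eq_iff_factorsThrough (σ : V → Bool) :
    (∀ e : {e : Sym2 V // e ∈ E}, ω e = true → ∀ u ∈ e.1, ∀ w ∈ e.1, σ u = σ w) ↔
      σ.FactorsThrough (bondGraph E ω).connectedComponentMk := by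
  constructor
  · intro hσ u w huw
    have hconn : conn E ω u w :=
      (conn_iff_reachable E ω).mpr (SimpleGraph.ConnectedComponent.eq.mp huw)
    clear huw
    induction hconn with
    | refl => rfl
    | tail _ hstep ih =>
      obtain ⟨-, he, hopen⟩ := hstep
      exact ih.trans (hσ _ hopen _ (Sym2.mem_mk_left _ _) _ (Sym2.mem_mk_right _ _))
  · intro hσ e hopen u hu w hw
    by_cases huw : u = w
    · rw [huw]
    · obtain ⟨e, he⟩ := e
      obtain rfl : e = s(u, w) := (Sym2.mem_and_mem_iff huw).mp ⟨hu, hw⟩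
      exact hσ (SimpleGraph.ConnectedComponent.eq.mpr
        (SimpleGraph.Adj.reachable (G := bondGraph E ω) ⟨huw, he, hopen⟩))

end Clusters

/-- `exp (h * (spin b - 1))`: the ghost-bond sum `(1 - e^{-2h}) + e^{-2h}` of a `+` spin, and
`e^{-2h}` for a `-` spin, whose ghost bond must be closed. -/
noncomputable def fieldWeight (h : ℝ) (b : Bool) : ℝ := if b then 1 else Real.exp (-2 * h)

theorem prod_fieldWeight {ι : Type*} (s : Finset ι) (h : ι → ℝ) (b : Bool) :
    ∏ i ∈ s, fieldWeight (h i) b = fieldWeight (∑ i ∈ s, h i) b := by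
  cases b
  · simp only [fieldWeight, Bool.false_eq_true, if_false]
    rw [Finset.mul_sum, Real.exp_sum]
  · simp [fieldWeight]

theorem sum_fieldWeight (h : ℝ) : ∑ b, fieldWeight h b = 1 + Real.exp (-2 * h) := by
  simp [fieldWeight]

theorem fieldWeight_false_div_sum (h : ℝ) :
    fieldWeight h false / ∑ b, fieldWeight h b = (1 - Real.tanh h) / 2 := by
  have hinv : Real.exp h * Real.exp (-h) = 1 := by rw [← Real.exp_add]; simp
  have hsq : Real.exp (-2 * h) = Real.exp (-h) * Real.exp (-h) := by rw [← Real.exp_add]; ring_nf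
  rw [sum_fieldWeight, fieldWeight, if_neg Bool.false_ne_true, Real.tanh_eq, hsq]
  field_simp
  linear_combination 2 * Real.exp (-h) * hinv

theorem fieldWeight_true_div_sum (h : ℝ) :
    fieldWeight h true / ∑ b, fieldWeight h b = Real.tanh h + (1 - Real.tanh h) / 2 := by
  have hsum : ∑ b, fieldWeight h b ≠ 0 := by rw [sum_fieldWeight]; positivity
  have hsplit : fieldWeight h true / ∑ b, fieldWeight h b
      = 1 - fieldWeight h false / ∑ b, fieldWeight h b := by
    rw [eq_sub_iff_add_eq, ← add_div, ← Fintype.sum_bool, div_self hsum]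
  rw [hsplit, fieldWeight_false_div_sum]
  ring

section Weights

variable [Fintype V] (J : Sym2 V → ℝ) (H : V → ℝ) (E : Finset (Sym2 V)) (ω : Config E)

theorem prod_esEdge_eq_ite [DecidableEq V] (σ : V → Bool) :
    (∏ e : {e : Sym2 V // e ∈ E}, if ω e then
        (if ∀ u ∈ e.1, ∀ w ∈ e.1, σ u = σ w then 1 - Real.exp (-2 * J e.1) else 0)
      else Real.exp (-2 * J e.1))
      = if σ.FactorsThrough (bondGraph E ω).connectedComponentMk then edgeWeight J E ω else 0 := by
  rw [← forall_open_edge_eq_iff_factorsThrough]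
  split_ifs with hσ
  · refine Finset.prod_congr rfl fun e _ => ?_
    by_cases hopen : ω e = true
    · rw [if_pos hopen, if_pos hopen, if_pos (hσ e hopen)]
    · rw [if_neg hopen, if_neg hopen]
  · push Not at hσ
    obtain ⟨e, hopen, hne⟩ := hσ
    exact Finset.prod_eq_zero (Finset.mem_univ e) (by simp [hopen, hne])

theorem sum_prod_esGhost [DecidableEq V] (σ : V → Bool) :
    ∑ ωg : V → Bool, ∏ v, (if ωg v then (if σ v = true then 1 - Real.exp (-2 * H v) else 0)
      else Real.exp (-2 * H v)) = ∏ v, fieldWeight (H v) (σ v) := by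
  rw [← Fintype.prod_sum (fun v (b : Bool) => if b then
    (if σ v = true then 1 - Real.exp (-2 * H v) else 0) else Real.exp (-2 * H v))]
  refine Finset.prod_congr rfl fun v _ => ?_
  cases σ v <;> simp [fieldWeight]

theorem sum_esWeight_ghost [DecidableEq V] (σ : V → Bool) :
    ∑ ωg : V → Bool, esWeight J H E (σ, (ω, ωg))
      = (if σ.FactorsThrough (bondGraph E ω).connectedComponentMk then edgeWeight J E ω else 0)
        * ∏ v, fieldWeight (H v) (σ v) := by
  simp only [esWeight, ← Finset.mul_sum, prod_esEdge_eq_ite, sum_prod_esGhost]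

noncomputable def clusterField (q : (bondGraph E ω).ConnectedComponent) : ℝ :=
  ∑ u with (bondGraph E ω).connectedComponentMk u = q, H u

theorem prod_fieldWeight_comp_mk [DecidableEq V]
    (τ : (bondGraph E ω).ConnectedComponent → Bool) :
    ∏ u, fieldWeight (H u) (τ ((bondGraph E ω).connectedComponentMk u))
      = ∏ q, fieldWeight (clusterField H E ω q) (τ q) := by
  rw [← Finset.prod_fiberwise Finset.univ (bondGraph E ω).connectedComponentMk]
  refine Finset.prod_congr rfl fun q _ => ?_
  rw [clusterField, ← prod_fieldWeight]
  exact Finset.prod_congr rfl fun u hu => by rw [(Finset.mem_filter.mp hu).2]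

theorem sum_esProb_ite [DecidableEq V] (P : (V → Bool) → Prop) [DecidablePred P] :
    ∑ σ : V → Bool, ∑ ωg : V → Bool, (if P σ then esProb J H E (σ, (ω, ωg)) else 0)
      = (edgeWeight J E ω / ∑ p, esWeight J H E p) *
        ∑ τ : (bondGraph E ω).ConnectedComponent → Bool,
          if P (τ ∘ (bondGraph E ω).connectedComponentMk) then
            ∏ q, fieldWeight (clusterField H E ω q) (τ q) else 0 := by
  set mk := (bondGraph E ω).connectedComponentMk
  set c := edgeWeight J E ω / ∑ p, esWeight J H E p
  have hσ : ∀ σ : V → Bool, ∑ ωg : V → Bool, (if P σ then esProb J H E (σ, (ω, ωg)) else 0)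
      = c * if σ.FactorsThrough mk then (if P σ then ∏ v, fieldWeight (H v) (σ v) else 0)
        else 0 := by
    intro σ
    calc ∑ ωg : V → Bool, (if P σ then esProb J H E (σ, (ω, ωg)) else 0)
        = if P σ then (∑ ωg : V → Bool, esWeight J H E (σ, (ω, ωg))) / ∑ p, esWeight J H E p
          else 0 := by
          split_ifs <;> simp [esProb, Finset.sum_div]
      _ = _ := by rw [sum_esWeight_ghost]; split_ifs <;> ring
  rw [Finset.sum_congr rfl fun σ _ => hσ σ, ← Finset.mul_sum,
    Function.Surjective.sum_ite_factorsThrough (π := mk) Quot.mk_surjective]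
  simp only [Function.comp_apply, mk, prod_fieldWeight_comp_mk]

theorem esProb_cond_forall_mem_eq [DecidableEq V]
    (hpos : 0 < ∑ σ : V → Bool, ∑ ωg : V → Bool, esProb J H E (σ, (ω, ωg)))
    (W : Finset V) (b : Bool) :
    (∑ σ : V → Bool, ∑ ωg : V → Bool,
        if ∀ u ∈ W, σ u = b then esProb J H E (σ, (ω, ωg)) else 0)
      / (∑ σ : V → Bool, ∑ ωg : V → Bool, esProb J H E (σ, (ω, ωg)))
      = ∏ q ∈ W.image (bondGraph E ω).connectedComponentMk,
          fieldWeight (clusterField H E ω q) b / ∑ b', fieldWeight (clusterField H E ω q) b' := by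
  have hden := sum_esProb_ite J H E ω (fun _ => True)
  simp only [if_true] at hden
  have hcond : ∀ τ : (bondGraph E ω).ConnectedComponent → Bool,
      (∀ u ∈ W, (τ ∘ (bondGraph E ω).connectedComponentMk) u = b)
        ↔ ∀ q ∈ W.image (bondGraph E ω).connectedComponentMk, τ q = b :=
    fun τ => by simp
  have hnum := sum_esProb_ite J H E ω (fun σ => ∀ u ∈ W, σ u = b)
  simp only [hcond] at hnum
  rw [hden] at hpos ⊢
  rw [hnum, mul_div_mul_left _ _ (left_ne_zero_of_mul hpos.ne'), sum_ite_forall_mem_div_sum_prod]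
  intro q
  rw [sum_fieldWeight]
  positivity

end Weights

end FK

theorem edwards_sokal_conditional_spins_general
    {V : Type*} [Fintype V] [DecidableEq V]
    (E : Finset (Sym2 V))
    (J : Sym2 V → ℝ)
    (H : V → ℝ)
    (ωi : FK.Config E)
    (hpos : 0 < ∑ σ : V → Bool, ∑ ωg : V → Bool, FK.esProb J H E (σ, (ωi, ωg)))
    (m : ℕ) (C : Fin m → Finset V) (hinj : Function.Injective C)
    (hC : ∀ j, C j ∈ FK.clusters E ωi)
    (v : Fin m → V) (hv : ∀ j, v j ∈ C j) :
    ((∑ σ : V → Bool, ∑ ωg : V → Bool,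
        if ∀ j, σ (v j) = true then FK.esProb J H E (σ, (ωi, ωg)) else 0)
      / (∑ σ : V → Bool, ∑ ωg : V → Bool, FK.esProb J H E (σ, (ωi, ωg)))
    = ∏ j, (Real.tanh (∑ u ∈ C j, H u) + (1 - Real.tanh (∑ u ∈ C j, H u)) / 2)) ∧
    ∀ j,
      (∑ σ : V → Bool, ∑ ωg : V → Bool,
          if σ (v j) = false then FK.esProb J H E (σ, (ωi, ωg)) else 0)
        / (∑ σ : V → Bool, ∑ ωg : V → Bool, FK.esProb J H E (σ, (ωi, ωg)))
      = (1 - Real.tanh (∑ u ∈ C j, H u)) / 2 := by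
  set mk := (FK.bondGraph E ωi).connectedComponentMk
  have hCj : ∀ j, C j = Finset.univ.filter (fun u => mk u = mk (v j)) := fun j =>
    (FK.eq_cluster_of_mem_clusters E ωi (hC j) (hv j)).trans (FK.cluster_eq_filter E ωi (v j))
  have hfield : ∀ j, FK.clusterField H E ωi (mk (v j)) = ∑ u ∈ C j, H u := fun j => by
    rw [hCj j]; rfl
  have hmk_inj : Set.InjOn (mk ∘ v) (Finset.univ : Finset (Fin m)) := fun i _ j _ hij =>
    hinj <| by rw [hCj i, hCj j, show mk (v i) = mk (v j) from hij]
  refine ⟨?_, fun j => ?_⟩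
  · have h := FK.esProb_cond_forall_mem_eq J H E ωi hpos (Finset.univ.image v) true
    rw [Finset.image_image, Finset.prod_image hmk_inj] at h
    simp only [Finset.forall_mem_image, Finset.mem_univ, true_implies] at h
    simpa only [Function.comp_apply, hfield, FK.fieldWeight_true_div_sum] using h
  · have h := FK.esProb_cond_forall_mem_eq J H E ωi hpos {v j} false
    simp only [Finset.mem_singleton, forall_eq, Finset.image_singleton,
      Finset.prod_singleton] at h
    rw [h, hfield, FK.fieldWeight_false_div_sum]

/-- conditional spin distribution of clusters under the Edwards–Sokal
coupling, and (conditional) mutual independence. -/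
theorem edwards_sokal_conditional_spins
    {V : Type*} [Fintype V] [DecidableEq V]
    (E : Finset (Sym2 V)) (hE : ∀ e ∈ E, ¬ e.IsDiag)
    (J : Sym2 V → ℝ) (hJ : ∀ e ∈ E, 0 ≤ J e)
    (H : V → ℝ) (hH : ∀ v, 0 ≤ H v)
    (ωi : FK.Config E)
    (hpos : 0 < ∑ σ : V → Bool, ∑ ωg : V → Bool, FK.esProb J H E (σ, (ωi, ωg)))
    (m : ℕ) (C : Fin m → Finset V) (hinj : Function.Injective C)
    (hC : ∀ j, C j ∈ FK.clusters E ωi)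
    (v : Fin m → V) (hv : ∀ j, v j ∈ C j) :
    ((∑ σ : V → Bool, ∑ ωg : V → Bool,
        if ∀ j, σ (v j) = true then FK.esProb J H E (σ, (ωi, ωg)) else 0)
      / (∑ σ : V → Bool, ∑ ωg : V → Bool, FK.esProb J H E (σ, (ωi, ωg)))
    = ∏ j, (Real.tanh (∑ u ∈ C j, H u) + (1 - Real.tanh (∑ u ∈ C j, H u)) / 2)) ∧
    ∀ j,
      (∑ σ : V → Bool, ∑ ωg : V → Bool,
          if σ (v j) = false then FK.esProb J H E (σ, (ωi, ωg)) else 0)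
        / (∑ σ : V → Bool, ∑ ωg : V → Bool, FK.esProb J H E (σ, (ωi, ωg)))
      = (1 - Real.tanh (∑ u ∈ C j, H u)) / 2 :=
  edwards_sokal_conditional_spins_general E J H ωi hpos m C hinj hC v hv
end

section
/- Edwards–Sokal one- and two-point identities on a finite graph with ghost: for all x, y ∈ V, ⟨σ_x⟩_{J,H} = P̂_{J,H}( x ↔ g ) and ⟨σ_x σ_y⟩_{J,H} = P̂_{J,H}( x ↔ y ). -/
open scoped Classical

/-!
The Edwards–Sokal coupling weighs a spin configuration `σ` (ghost spin `+1`) together with a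
bond configuration `ω` by the product of the bond weights times the indicator that every open
bond joins equal spins. Summing out `ω` bond by bond gives `exp (-∑ J - ∑ H)` times the Ising
weight of `σ`, since `(1 - e^{-2J}) 𝟙[σ_u = σ_v] + e^{-2J} = e^{J σ_u σ_v - J}`. Summing out
`σ` gives the FK weight of `ω`: the compatible `σ` are the choices of one spin per cluster
not containing the ghost, so there are `2 ^ k(ω)` of them. Given `ω`, the product of the
spins at `a` and `b` averages to `1` over compatible `σ` when `a ↔ b`; otherwise it averages
to `0`, because flipping the ghost-free cluster of one endpoint is a weight-preserving
involution that changes its sign.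
-/

namespace FK

variable {V : Type*} {E : Finset (Sym2 V)}

instance adjG_symm (ω : GConfig E) : Std.Symm (adjG E ω) where
  symm
    | some _, some _, ⟨hne, he, hω⟩ => ⟨hne.symm, Sym2.eq_swap ▸ he, by simpa [Sym2.eq_swap]⟩
    | some _, none, h => h
    | none, some _, h => h

lemma connG_symm {ω : GConfig E} {a b : Option V} (h : connG E ω a b) : connG E ω b a :=
  Std.Symm.symm (r := Relation.ReflTransGen (adjG E ω)) _ _ h

lemma connG_of_mem_edge {ω : GConfig E} {e : {e : Sym2 V // e ∈ E}} (hopen : ω.1 e = true)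
    {u v : V} (hu : u ∈ e.1) (hv : v ∈ e.1) : connG E ω (some u) (some v) := by
  by_cases huv : u = v
  · exact huv ▸ Relation.ReflTransGen.refl
  obtain ⟨e, he⟩ := e
  obtain rfl : e = s(u, v) := (Sym2.mem_and_mem_iff huv).mp ⟨hu, hv⟩
  exact Relation.ReflTransGen.single ⟨huv, he, hopen⟩

lemma connG_none_of_open {ω : GConfig E} {v : V} (hv : ω.2 v = true) :
    connG E ω (some v) none :=
  Relation.ReflTransGen.single hv

/-- The spin configuration on `V ∪ {g}`, with the ghost spin `+1`. -/
def extend (σ : V → Bool) (a : Option V) : Bool := a.elim true σ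

@[simp] lemma extend_some (σ : V → Bool) (v : V) : extend σ (some v) = σ v := rfl

@[simp] lemma spin_extend_none (σ : V → Bool) : spin (extend σ none) = 1 := rfl

def Admissible (ω : GConfig E) (σ : V → Bool) : Prop :=
  (∀ e : {e : Sym2 V // e ∈ E}, ω.1 e = true → ∀ u ∈ e.1, ∀ v ∈ e.1, σ u = σ v) ∧
  ∀ v, ω.2 v = true → σ v = true

lemma Admissible.extend_eq {ω : GConfig E} {σ : V → Bool} (h : Admissible ω σ)
    {a b : Option V} (hab : connG E ω a b) : extend σ a = extend σ b := by
  induction hab with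
  | refl => rfl
  | @tail b c _ hbc ih =>
    rw [ih]
    match b, c, hbc with
    | some u, some v, ⟨_, he, hω⟩ =>
      exact h.1 ⟨s(u, v), he⟩ hω u (Sym2.mem_mk_left u v) v (Sym2.mem_mk_right u v)
    | some u, none, hu => exact h.2 u hu
    | none, some v, hv => exact (h.2 v hv).symm

lemma spin_not (b : Bool) : spin (!b) = -spin b := by cases b <;> simp [spin]

lemma spin_mul_self (b : Bool) : spin b * spin b = 1 := by cases b <;> norm_num [spin]

noncomputable def flipCluster (ω : GConfig E) (w : V) (σ : V → Bool) (v : V) : Bool :=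
  if connG E ω (some w) (some v) then !σ v else σ v

lemma flipCluster_involutive (ω : GConfig E) (w : V) : Function.Involutive (flipCluster ω w) :=
  fun σ => funext fun v => by by_cases h : connG E ω (some w) (some v) <;> simp [flipCluster, h]

lemma spin_extend_flipCluster {ω : GConfig E} {w : V} (hw : ¬ connG E ω (some w) none)
    (σ : V → Bool) (a : Option V) :
    spin (extend (flipCluster ω w σ) a) =
      if connG E ω (some w) a then -spin (extend σ a) else spin (extend σ a) := by
  cases a with
  | none => rw [if_neg hw]; rfl
  | some v =>
    by_cases h : connG E ω (some w) (some v)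
    · rw [if_pos h, ← spin_not]; exact congrArg spin (if_pos h)
    · rw [if_neg h]; exact congrArg spin (if_neg h)

-- Flipping a ghost-free cluster preserves admissibility: its boundary bonds are all closed.
lemma Admissible.flipCluster {ω : GConfig E} {w : V} (hw : ¬ connG E ω (some w) none)
    {σ : V → Bool} (h : Admissible ω σ) : Admissible ω (flipCluster ω w σ) := by
  refine ⟨fun e he u hu v hv => ?_, fun v hv => ?_⟩
  · have huv := connG_of_mem_edge he hu hv
    unfold FK.flipCluster
    by_cases hwu : connG E ω (some w) (some u)
    · rw [if_pos hwu, if_pos (show connG E ω _ _ from hwu.trans huv), h.1 e he u hu v hv]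
    · rw [if_neg hwu, if_neg fun hwv => hwu (hwv.trans (connG_symm huv)), h.1 e he u hu v hv]
  · have hwv : ¬ connG E ω (some w) (some v) := fun hwv => hw (hwv.trans (connG_none_of_open hv))
    rw [FK.flipCluster, if_neg hwv]
    exact h.2 v hv

noncomputable def bondWeight (K : ℝ) (p : Prop) [Decidable p] (b : Bool) : ℝ :=
  if b then (if p then 1 - Real.exp (-2 * K) else 0) else Real.exp (-2 * K)

lemma bondWeight_true_add_false (K : ℝ) (p : Prop) [Decidable p] :
    bondWeight K p true + bondWeight K p false = Real.exp (K * (if p then 1 else -1) - K) := by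
  rw [bondWeight, bondWeight, if_pos rfl, if_neg Bool.false_ne_true]
  split_ifs
  · rw [mul_one, sub_self, Real.exp_zero, sub_add_cancel]
  · rw [zero_add]; ring_nf

section

variable [Fintype V]

noncomputable def clusterG (ω : GConfig E) (v : V) : Finset V :=
  Finset.univ.filter fun u => connG E ω (some v) (some u)

lemma clusterG_eq_iff {ω : GConfig E} {u v : V} :
    clusterG ω u = clusterG ω v ↔ connG E ω (some u) (some v) := by
  refine ⟨fun h => ?_, fun h => ?_⟩
  · have hv : v ∈ clusterG ω u := h ▸ Finset.mem_filter.mpr ⟨Finset.mem_univ v, .refl⟩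
    exact (Finset.mem_filter.mp hv).2
  · ext w
    simp only [clusterG, Finset.mem_filter, Finset.mem_univ, true_and]
    exact ⟨(connG_symm h).trans, h.trans⟩

variable [DecidableEq V]

-- Stated with the instances in scope so that its `if` matches the one in `esWeight`.
lemma pairSpin_eq_ite (σ : V → Bool) (e : Sym2 V) :
    pairSpin σ e = if ∀ u ∈ e, ∀ v ∈ e, σ u = σ v then 1 else -1 := by
  induction e using Sym2.ind with
  | _ a b =>
    simp only [pairSpin, Sym2.lift_mk, Sym2.mem_iff, forall_eq_or_imp, forall_eq]
    cases σ a <;> cases σ b <;> norm_num [spin]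

lemma esWeight_eq_prod (J : Sym2 V → ℝ) (H : V → ℝ) (σ : V → Bool) (ω : GConfig E) :
    esWeight J H E (σ, ω) =
      (∏ e : {e // e ∈ E}, bondWeight (J e) (∀ u ∈ e.1, ∀ v ∈ e.1, σ u = σ v) (ω.1 e)) *
        ∏ v, bondWeight (H v) (σ v = true) (ω.2 v) :=
  rfl

lemma sum_esWeight_bonds_eq_mul_isingWeight (J : Sym2 V → ℝ) (H : V → ℝ) (σ : V → Bool) :
    ∑ ω : GConfig E, esWeight J H E (σ, ω) =
      Real.exp (-(∑ e ∈ E, J e) - ∑ v, H v) * isingWeight J H E σ := by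
  simp only [Fintype.sum_prod_type, esWeight_eq_prod, ← Finset.mul_sum, ← Finset.sum_mul,
    ← Fintype.prod_sum, Fintype.sum_bool, bondWeight_true_add_false]
  rw [← Real.exp_sum, ← Real.exp_sum, ← Real.exp_add, isingWeight, ← Real.exp_add,
    ← Finset.sum_coe_sort E, ← Finset.sum_coe_sort E]
  congr 1
  simp only [pairSpin_eq_ite, spin, Finset.sum_sub_distrib]
  ring

noncomputable def ghostWeight (H : V → ℝ) (ω : GConfig E) : ℝ :=
  ∏ v, if ω.2 v then 1 - Real.exp (-2 * H v) else Real.exp (-2 * H v)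

lemma esWeight_eq_ite (J : Sym2 V → ℝ) (H : V → ℝ) (ω : GConfig E) (σ : V → Bool) :
    esWeight J H E (σ, ω) =
      if Admissible ω σ then edgeWeight J E ω.1 * ghostWeight H ω else 0 := by
  split_ifs with h
  · unfold esWeight edgeWeight ghostWeight
    congr 1 <;> refine Finset.prod_congr rfl fun i _ => ?_
    · by_cases hi : ω.1 i
      · rw [if_pos hi, if_pos hi, if_pos (h.1 i hi)]
      · simp [hi]
    · by_cases hi : ω.2 i
      · rw [if_pos hi, if_pos hi, if_pos (h.2 i hi)]
      · simp [hi]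
  · obtain ⟨e, he, u, hu, v, hv, hne⟩ | ⟨v, hv, hσv⟩ : (∃ e, ω.1 e = true ∧ ∃ u ∈ e.1, ∃ v ∈ e.1,
        σ u ≠ σ v) ∨ ∃ v, ω.2 v = true ∧ σ v ≠ true := by
      simpa only [Admissible, not_and_or, not_forall, exists_prop] using h
    · refine mul_eq_zero_of_left (Finset.prod_eq_zero (Finset.mem_univ e) ?_) _
      rw [if_pos he, if_neg fun hall => hne (hall u hu v hv)]
    · refine mul_eq_zero_of_right _ (Finset.prod_eq_zero (Finset.mem_univ v) ?_)
      rw [if_pos hv, if_neg hσv]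

noncomputable def freeClusters (ω : GConfig E) : Finset (Finset V) :=
  (Finset.univ.filter fun v => ¬ connG E ω (some v) none).image (clusterG ω)

lemma card_freeClusters (ω : GConfig E) : (freeClusters ω).card = kGhost E ω := rfl

lemma clusterG_mem_freeClusters {ω : GConfig E} {v : V} (h : ¬ connG E ω (some v) none) :
    clusterG ω v ∈ freeClusters ω :=
  Finset.mem_image_of_mem _ (Finset.mem_filter.mpr ⟨Finset.mem_univ v, h⟩)

noncomputable def clusterRep {ω : GConfig E} (C : freeClusters ω) : V :=
  (Finset.mem_image.mp C.2).choose

lemma clusterRep_spec {ω : GConfig E} (C : freeClusters ω) :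
    ¬ connG E ω (some (clusterRep C)) none ∧ clusterG ω (clusterRep C) = C := by
  obtain ⟨hmem, hC⟩ := (Finset.mem_image.mp C.2).choose_spec
  exact ⟨(Finset.mem_filter.mp hmem).2, hC⟩

noncomputable def spinOfClusters (ω : GConfig E) (g : freeClusters ω → Bool) (v : V) : Bool :=
  if h : connG E ω (some v) none then true else g ⟨clusterG ω v, clusterG_mem_freeClusters h⟩

lemma spinOfClusters_eq_of_connG {ω : GConfig E} (g : freeClusters ω → Bool) {u v : V}
    (h : connG E ω (some u) (some v)) : spinOfClusters ω g u = spinOfClusters ω g v := by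
  have hghost : connG E ω (some u) none ↔ connG E ω (some v) none :=
    ⟨(connG_symm h).trans, h.trans⟩
  unfold spinOfClusters
  by_cases hu : connG E ω (some u) none
  · rw [dif_pos hu, dif_pos (hghost.mp hu)]
  · rw [dif_neg hu, dif_neg (mt hghost.mpr hu)]
    exact congrArg g (Subtype.ext (clusterG_eq_iff.mpr h))

lemma admissible_spinOfClusters (ω : GConfig E) (g : freeClusters ω → Bool) :
    Admissible ω (spinOfClusters ω g) :=
  ⟨fun _ he _ hu _ hv => spinOfClusters_eq_of_connG g (connG_of_mem_edge he hu hv),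
    fun _ hv => dif_pos (connG_none_of_open hv)⟩

noncomputable def admissibleEquiv (ω : GConfig E) :
    {σ : V → Bool // Admissible ω σ} ≃ (freeClusters ω → Bool) where
  toFun σ C := σ.1 (clusterRep C)
  invFun g := ⟨spinOfClusters ω g, admissible_spinOfClusters ω g⟩
  left_inv := by
    rintro ⟨σ, hσ⟩
    refine Subtype.ext (funext fun v => ?_)
    by_cases hv : connG E ω (some v) none
    · exact (dif_pos hv).trans (hσ.extend_eq hv).symm
    · let C : freeClusters ω := ⟨clusterG ω v, clusterG_mem_freeClusters hv⟩
      exact (dif_neg hv).trans (hσ.extend_eq (clusterG_eq_iff.mp (clusterRep_spec C).2))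
  right_inv g := by
    funext C
    obtain ⟨hghost, hC⟩ := clusterRep_spec C
    exact (dif_neg hghost).trans (congrArg g (Subtype.ext hC))

lemma card_admissible (ω : GConfig E) :
    (Finset.univ.filter (Admissible ω)).card = 2 ^ kGhost E ω := by
  rw [← Fintype.card_subtype, Fintype.card_congr (admissibleEquiv ω), Fintype.card_fun,
    Fintype.card_coe, Fintype.card_bool, card_freeClusters]

lemma sum_esWeight_spins_eq_fkWeight (J : Sym2 V → ℝ) (H : V → ℝ) (ω : GConfig E) :
    ∑ σ : V → Bool, esWeight J H E (σ, ω) = fkWeight J H E ω := by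
  simp_rw [esWeight_eq_ite]
  rw [← Finset.sum_filter, Finset.sum_const, card_admissible, nsmul_eq_mul, fkWeight,
    ghostWeight]
  push_cast
  ring

lemma esWeight_flipCluster (J : Sym2 V → ℝ) (H : V → ℝ) {ω : GConfig E} {w : V}
    (hw : ¬ connG E ω (some w) none) (σ : V → Bool) :
    esWeight J H E (flipCluster ω w σ, ω) = esWeight J H E (σ, ω) := by
  have hiff : Admissible ω (flipCluster ω w σ) ↔ Admissible ω σ :=
    ⟨fun h => flipCluster_involutive ω w σ ▸ h.flipCluster hw, (·.flipCluster hw)⟩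
  simp only [esWeight_eq_ite, hiff]

lemma sum_esWeight_mul_eq_zero_of_flipCluster (J : Sym2 V → ℝ) (H : V → ℝ) {ω : GConfig E}
    {w : V} (hw : ¬ connG E ω (some w) none) {f : (V → Bool) → ℝ}
    (hf : ∀ σ, f (flipCluster ω w σ) = -f σ) :
    ∑ σ : V → Bool, esWeight J H E (σ, ω) * f σ = 0 := by
  have hneg := Equiv.sum_comp (flipCluster_involutive ω w).toPerm
    fun σ => esWeight J H E (σ, ω) * f σ
  simp only [Function.Involutive.coe_toPerm, esWeight_flipCluster J H hw, hf, mul_neg,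
    Finset.sum_neg_distrib] at hneg
  linarith

lemma sum_esWeight_mul_spin_extend (J : Sym2 V → ℝ) (H : V → ℝ) (ω : GConfig E)
    (a b : Option V) :
    ∑ σ : V → Bool, esWeight J H E (σ, ω) * (spin (extend σ a) * spin (extend σ b)) =
      if connG E ω a b then fkWeight J H E ω else 0 := by
  split_ifs with hab
  · rw [← sum_esWeight_spins_eq_fkWeight]
    refine Finset.sum_congr rfl fun σ _ => ?_
    rw [esWeight_eq_ite]
    split_ifs with h
    · rw [h.extend_eq hab, spin_mul_self, mul_one]
    · rw [zero_mul]
  wlog ha : ¬ connG E ω a none generalizing a b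
  · have hb : ¬ connG E ω b none := fun hb => hab ((not_not.mp ha).trans (connG_symm hb))
    simpa only [mul_comm (spin (extend _ a))] using this b a (mt connG_symm hab) hb
  obtain ⟨w, rfl⟩ : ∃ w, a = some w :=
    Option.ne_none_iff_exists'.mp fun h => ha (h ▸ .refl)
  refine sum_esWeight_mul_eq_zero_of_flipCluster J H ha fun σ => ?_
  rw [spin_extend_flipCluster ha, spin_extend_flipCluster ha, if_pos .refl, if_neg hab, neg_mul]

lemma sum_sum_esWeight_mul (J : Sym2 V → ℝ) (H : V → ℝ) (f : (V → Bool) → ℝ) :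
    ∑ ω : GConfig E, ∑ σ : V → Bool, esWeight J H E (σ, ω) * f σ =
      Real.exp (-(∑ e ∈ E, J e) - ∑ v, H v) * ∑ σ : V → Bool, isingWeight J H E σ * f σ := by
  rw [Finset.sum_comm, Finset.mul_sum]
  refine Finset.sum_congr rfl fun σ _ => ?_
  rw [← Finset.sum_mul, sum_esWeight_bonds_eq_mul_isingWeight, mul_assoc]

lemma ising_expectation_eq_fk_prob (J : Sym2 V → ℝ) (H : V → ℝ) (f : (V → Bool) → ℝ)
    (P : GConfig E → Prop)
    (hP : ∀ ω, ∑ σ : V → Bool, esWeight J H E (σ, ω) * f σ =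
      if P ω then fkWeight J H E ω else 0) :
    ∑ σ : V → Bool, isingProb J H E σ * f σ =
      ∑ ω : GConfig E, if P ω then fkProb J H E ω else 0 := by
  have hZ : ∑ ω : GConfig E, fkWeight J H E ω =
      Real.exp (-(∑ e ∈ E, J e) - ∑ v, H v) * ∑ σ : V → Bool, isingWeight J H E σ := by
    simpa only [mul_one, sum_esWeight_spins_eq_fkWeight] using sum_sum_esWeight_mul J H (E := E) fun _ => 1
  have hN : ∑ ω : GConfig E, (if P ω then fkWeight J H E ω else 0) =
      Real.exp (-(∑ e ∈ E, J e) - ∑ v, H v) * ∑ σ : V → Bool, isingWeight J H E σ * f σ := by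
    simpa only [hP] using sum_sum_esWeight_mul J H (E := E) f
  have hfk : ∀ ω, (if P ω then fkProb J H E ω else 0) =
      (if P ω then fkWeight J H E ω else 0) / ∑ ω' : GConfig E, fkWeight J H E ω' := fun ω => by
    split_ifs <;> simp [fkProb]
  simp only [isingProb, div_mul_eq_mul_div, ← Finset.sum_div, hfk]
  rw [hZ, hN, mul_div_mul_left _ _ (Real.exp_ne_zero _)]

lemma ising_spin_correlation_eq_fk_prob (J : Sym2 V → ℝ) (H : V → ℝ) (a b : Option V) :
    ∑ σ : V → Bool, isingProb J H E σ * (spin (extend σ a) * spin (extend σ b)) =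
      ∑ ω : GConfig E, if connG E ω a b then fkProb J H E ω else 0 :=
  ising_expectation_eq_fk_prob J H _ _ (sum_esWeight_mul_spin_extend J H · a b)

end

end FK

theorem edwards_sokal_correlation_identities_general
    {V : Type*} [Fintype V] [DecidableEq V]
    (E : Finset (Sym2 V))
    (J : Sym2 V → ℝ)
    (H : V → ℝ) (x y : V) :
    ((∑ σ : V → Bool, FK.isingProb J H E σ * FK.spin (σ x))
      = ∑ ω : FK.GConfig E,
          if FK.connG E ω (some x) none then FK.fkProb J H E ω else 0) ∧
    ((∑ σ : V → Bool, FK.isingProb J H E σ * (FK.spin (σ x) * FK.spin (σ y)))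
      = ∑ ω : FK.GConfig E,
          if FK.connG E ω (some x) (some y) then FK.fkProb J H E ω else 0) := by
  refine ⟨?_, FK.ising_spin_correlation_eq_fk_prob J H (some x) (some y)⟩
  simpa only [FK.extend_some, FK.spin_extend_none, mul_one] using
    FK.ising_spin_correlation_eq_fk_prob J H (some x) none

/-- Edwards–Sokal one- and two-point identities:
`⟨σ_x⟩ = P̂(x ↔ g)` and `⟨σ_x σ_y⟩ = P̂(x ↔ y)`. -/
theorem edwards_sokal_correlation_identities
    {V : Type*} [Fintype V] [DecidableEq V]
    (E : Finset (Sym2 V)) (hE : ∀ e ∈ E, ¬ e.IsDiag)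
    (J : Sym2 V → ℝ) (hJ : ∀ e ∈ E, 0 ≤ J e)
    (H : V → ℝ) (hH : ∀ v, 0 ≤ H v) (x y : V) :
    ((∑ σ : V → Bool, FK.isingProb J H E σ * FK.spin (σ x))
      = ∑ ω : FK.GConfig E,
          if FK.connG E ω (some x) none then FK.fkProb J H E ω else 0) ∧
    ((∑ σ : V → Bool, FK.isingProb J H E σ * (FK.spin (σ x) * FK.spin (σ y)))
      = ∑ ω : FK.GConfig E,
          if FK.connG E ω (some x) (some y) then FK.fkProb J H E ω else 0) :=
  edwards_sokal_correlation_identities_general E J H x y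
end

section
/- Edwards–Sokal moment generating function identity (finite-graph version of the equality in Proposition 3.3 and of equation (5.5)): for every function f : V → ℝ, E_{P_{J,0}}[ exp( ∑_{v∈V} f_v σ_v ) ] = E_{P̃_{J,0}}[ ∏_{C a cluster of ω̃} cosh( ∑_{v∈C} f_v ) ]; moreover, if f_v ≥ 0 for all v, both sides are ≥ 1. -/
open scoped Classical

/-!
Write each Ising edge weight as `exp (J σ_u σ_v) = e^J (e^{-2J} + (1 - e^{-2J}) [σ_u = σ_v])`
and expand the product over edges as a sum over bond configurations `ω`. For fixed `ω` only spin
configurations constant on the clusters of `ω` survive, each with the FK edge weight of `ω`, and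
summing `exp (∑ f_v σ_v)` over them gives `∏_C 2 cosh (∑_{v ∈ C} f_v)`; the factors `2` make
up the cluster weight `2 ^ k(ω)`. The case `f = 0` identifies the two partition functions up to
`e^{∑ J}`, so the normalised expectations agree. The lower bound follows from `cosh ≥ 1` and the
nonnegativity of the random-cluster weights for `J ≥ 0`.
-/

open Finset Real

section Quotient

variable {α β M : Type*} [Fintype α] [DecidableEq α] [Fintype β] [DecidableEq β]
  [AddCommMonoid M]

theorem Setoid.sum_filter_respects_eq_sum_quotient (s : Setoid α) [DecidableEq (Quotient s)]
    (g : (α → β) → M) :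
    ∑ σ : α → β with ∀ a b, s a b → σ a = σ b, g σ =
      ∑ τ : Quotient s → β, g (τ ∘ Quotient.mk s) := by
  have hrange : ({σ : α → β | ∀ a b, s a b → σ a = σ b} : Finset (α → β)) =
      univ.image (· ∘ Quotient.mk s) := by
    ext σ
    simp only [mem_filter, mem_univ, true_and, mem_image]
    refine ⟨fun h => ⟨fun q => σ q.out, funext fun a => h _ _ (Quotient.mk_out a)⟩, ?_⟩
    rintro ⟨τ, rfl⟩ a b hab
    exact congrArg τ (Quotient.sound hab)
  rw [hrange, sum_image fun τ _ τ' _ h => Quotient.mk_surjective.injective_comp_right h]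

end Quotient

namespace FK

theorem sum_bool_exp_mul_spin (x : ℝ) : ∑ b : Bool, exp (x * spin b) = 2 * cosh x := by
  simp only [Fintype.sum_bool, spin, if_true, Bool.false_eq_true, if_false, cosh_eq]
  ring_nf

theorem sum_exp_mul_spin_comp_eq_prod_cosh {α ι : Type*} [Fintype α] [Fintype ι]
    [DecidableEq ι] (p : α → ι) (f : α → ℝ) :
    ∑ τ : ι → Bool, exp (∑ v, f v * spin (τ (p v))) =
      ∏ i, 2 * cosh (∑ v with p v = i, f v) := by
  have hfiber (τ : ι → Bool) :
      ∑ v, f v * spin (τ (p v)) = ∑ i, (∑ v with p v = i, f v) * spin (τ i) := by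
    rw [← sum_fiberwise univ p]
    refine sum_congr rfl fun i _ => ?_
    rw [sum_mul]
    exact sum_congr rfl fun v hv => by rw [(mem_filter.mp hv).2]
  simp_rw [hfiber, exp_sum]
  rw [← Fintype.prod_sum fun i b => exp ((∑ v with p v = i, f v) * spin b)]
  simp_rw [sum_bool_exp_mul_spin]

variable {V : Type*}

instance instSymmAdj (E : Finset (Sym2 V)) (ω : Config E) : Std.Symm (adj E ω) where
  symm _ _ := fun ⟨hne, he, hω⟩ =>
    ⟨hne.symm, Sym2.eq_swap ▸ he, by simpa [Sym2.eq_swap] using hω⟩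

def connSetoid (E : Finset (Sym2 V)) (ω : Config E) : Setoid V where
  r := conn E ω
  iseqv := ⟨fun _ => .refl, Std.Symm.symm (r := Relation.ReflTransGen (adj E ω)) _ _, .trans⟩

theorem prod_clusters_eq_prod_quotient [Fintype V] [DecidableEq V] (E : Finset (Sym2 V))
    (ω : Config E) (g : Finset V → ℝ) :
    ∏ C ∈ clusters E ω, g C =
      ∏ q : Quotient (connSetoid E ω), g {v | Quotient.mk _ v = q} := by
  set s := connSetoid E ω
  set classOf := fun q : Quotient s => ({v | Quotient.mk s v = q} : Finset V)
  have hcluster : cluster E ω = classOf ∘ Quotient.mk s := by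
    ext v u
    simpa [cluster, classOf] using
      ⟨fun h => Quotient.sound (s.symm h), fun h => s.symm (Quotient.exact h)⟩
  have hinj : Function.Injective classOf := fun q q' h => by
    simpa [classOf] using congrArg (q.out ∈ ·) h
  rw [clusters, hcluster, ← image_image, image_univ_of_surjective Quotient.mk_surjective,
    prod_image hinj.injOn]

noncomputable def bondFactor (σ : V → Bool) (j : ℝ) (e : Sym2 V) (b : Bool) : ℝ :=
  if b then (if (e.map σ).IsDiag then 1 - exp (-2 * j) else 0) else exp (-2 * j)

theorem exp_mul_pairSpin (σ : V → Bool) (j : ℝ) (e : Sym2 V) :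
    exp (j * pairSpin σ e) = exp j * ∑ b, bondFactor σ j e b := by
  induction e using Sym2.inductionOn with
  | hf u v =>
    simp only [pairSpin, Sym2.lift_mk, bondFactor, Sym2.map_mk, Sym2.mk_isDiag_iff,
      Fintype.sum_bool, if_true, Bool.false_eq_true, if_false]
    cases σ u <;> cases σ v <;> simp [spin, ← exp_add] <;> ring_nf

theorem exp_sum_mul_pairSpin [DecidableEq V] (J : Sym2 V → ℝ) (E : Finset (Sym2 V))
    (σ : V → Bool) :
    exp (∑ e ∈ E, J e * pairSpin σ e) =
      exp (∑ e ∈ E, J e) * ∑ ω : Config E, ∏ e : E, bondFactor σ (J e) e.1 (ω e) := by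
  rw [← sum_coe_sort E, exp_sum]
  simp_rw [exp_mul_pairSpin]
  rw [prod_mul_distrib, ← exp_sum, sum_coe_sort E J, Fintype.prod_sum]

theorem forall_open_map_isDiag_iff {E : Finset (Sym2 V)} {ω : Config E} {σ : V → Bool} :
    (∀ e, ω e = true → (e.1.map σ).IsDiag) ↔ ∀ u v, conn E ω u v → σ u = σ v := by
  constructor
  · intro h u v huv
    induction huv with
    | refl => rfl
    | tail _ hadj ih =>
      obtain ⟨-, he, hopen⟩ := hadj
      exact ih.trans (Sym2.mk_isDiag_iff.mp (h ⟨_, he⟩ hopen))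
  · rintro h ⟨e, he⟩ hopen
    induction e using Sym2.inductionOn with
    | hf u v =>
      rw [Sym2.map_mk, Sym2.mk_isDiag_iff]
      by_cases huv : u = v
      · rw [huv]
      · exact h u v (.single ⟨huv, he, hopen⟩)

theorem prod_bondFactor (J : Sym2 V → ℝ) (E : Finset (Sym2 V)) (ω : Config E)
    (σ : V → Bool) :
    ∏ e : E, bondFactor σ (J e) e.1 (ω e) =
      if ∀ u v, conn E ω u v → σ u = σ v then edgeWeight J E ω else 0 := by
  have hfactor (e : {e // e ∈ E}) : bondFactor σ (J e) e.1 (ω e) =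
      if ω e = true → (e.1.map σ).IsDiag then
        (if ω e then 1 - exp (-2 * J e) else exp (-2 * J e)) else 0 := by
    unfold bondFactor
    cases ω e <;> simp
  simp_rw [hfactor]
  rw [Fintype.prod_ite_zero]
  exact if_congr forall_open_map_isDiag_iff rfl rfl

theorem sum_exp_of_forall_conn_eq [Fintype V] [DecidableEq V] (E : Finset (Sym2 V))
    (ω : Config E) (f : V → ℝ) :
    ∑ σ : V → Bool with ∀ u v, conn E ω u v → σ u = σ v,
        exp (∑ v, f v * spin (σ v)) =
      ∏ C ∈ clusters E ω, 2 * cosh (∑ v ∈ C, f v) := by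
  rw [prod_clusters_eq_prod_quotient, ← sum_exp_mul_spin_comp_eq_prod_cosh]
  exact Setoid.sum_filter_respects_eq_sum_quotient (connSetoid E ω) _

theorem sum_isingWeight_mul_exp [Fintype V] [DecidableEq V] (J : Sym2 V → ℝ)
    (E : Finset (Sym2 V)) (f : V → ℝ) :
    ∑ σ : V → Bool, isingWeight J (fun _ => 0) E σ * exp (∑ v, f v * spin (σ v)) =
      exp (∑ e ∈ E, J e) *
        ∑ ω : Config E, rcWeight J E ω * ∏ C ∈ clusters E ω, cosh (∑ v ∈ C, f v) := by
  have hising (σ : V → Bool) :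
      isingWeight J (fun _ => 0) E σ = exp (∑ e ∈ E, J e * pairSpin σ e) := by
    simp [isingWeight]
  have hcompatible (ω : Config E) :
      ∑ σ : V → Bool,
          (∏ e : E, bondFactor σ (J e) e.1 (ω e)) * exp (∑ v, f v * spin (σ v)) =
        rcWeight J E ω * ∏ C ∈ clusters E ω, cosh (∑ v ∈ C, f v) := by
    simp_rw [prod_bondFactor, ite_mul, zero_mul]
    rw [← sum_filter, ← mul_sum, sum_exp_of_forall_conn_eq, rcWeight, prod_mul_distrib,
      prod_const]
    ring
  calc _ = ∑ σ : V → Bool, exp (∑ e ∈ E, J e) * ∑ ω : Config E,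
        (∏ e : E, bondFactor σ (J e) e.1 (ω e)) * exp (∑ v, f v * spin (σ v)) := by
        simp_rw [hising, exp_sum_mul_pairSpin, mul_assoc, sum_mul]
    _ = _ := by
        rw [← mul_sum, sum_comm]
        simp_rw [hcompatible]

theorem sum_isingWeight [Fintype V] [DecidableEq V] (J : Sym2 V → ℝ) (E : Finset (Sym2 V)) :
    ∑ σ : V → Bool, isingWeight J (fun _ => 0) E σ =
      exp (∑ e ∈ E, J e) * ∑ ω : Config E, rcWeight J E ω := by
  simpa using sum_isingWeight_mul_exp J E 0

theorem sum_rcWeight_pos [Fintype V] [DecidableEq V] (J : Sym2 V → ℝ) (E : Finset (Sym2 V)) :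
    0 < ∑ ω : Config E, rcWeight J E ω := by
  have hising : 0 < ∑ σ : V → Bool, isingWeight J (fun _ => 0) E σ :=
    sum_pos (fun σ _ => exp_pos _) univ_nonempty
  rw [sum_isingWeight] at hising
  exact pos_of_mul_pos_right hising (exp_pos _).le

theorem sum_isingProb_mul_exp [Fintype V] [DecidableEq V] (J : Sym2 V → ℝ)
    (E : Finset (Sym2 V)) (f : V → ℝ) :
    ∑ σ : V → Bool, isingProb J (fun _ => 0) E σ * exp (∑ v, f v * spin (σ v)) =
      ∑ ω : Config E, rcProb J E ω * ∏ C ∈ clusters E ω, cosh (∑ v ∈ C, f v) := by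
  simp only [isingProb, rcProb, div_mul_eq_mul_div, ← sum_div]
  rw [sum_isingWeight_mul_exp, sum_isingWeight, mul_div_mul_left _ _ (exp_pos _).ne']

theorem rcWeight_nonneg [Fintype V] [DecidableEq V] {J : Sym2 V → ℝ} {E : Finset (Sym2 V)}
    (hJ : ∀ e ∈ E, 0 ≤ J e) (ω : Config E) : 0 ≤ rcWeight J E ω := by
  refine mul_nonneg (by positivity) (prod_nonneg fun e _ => ?_)
  split
  · exact sub_nonneg.mpr (exp_le_one_iff.mpr (by linarith [hJ e e.2]))
  · exact (exp_pos _).le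

theorem one_le_sum_rcProb_mul_prod_cosh [Fintype V] [DecidableEq V] {J : Sym2 V → ℝ}
    {E : Finset (Sym2 V)} (hJ : ∀ e ∈ E, 0 ≤ J e) (f : V → ℝ) :
    1 ≤ ∑ ω : Config E, rcProb J E ω * ∏ C ∈ clusters E ω, cosh (∑ v ∈ C, f v) := by
  simp only [rcProb, div_mul_eq_mul_div, ← sum_div]
  rw [one_le_div (sum_rcWeight_pos J E)]
  exact sum_le_sum fun ω _ => le_mul_of_one_le_right (rcWeight_nonneg hJ ω)
    (one_le_prod fun C _ => one_le_cosh _)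

end FK

theorem edwards_sokal_mgf_identity_general
    {V : Type*} [Fintype V] [DecidableEq V]
    (E : Finset (Sym2 V))
    (J : Sym2 V → ℝ) (hJ : ∀ e ∈ E, 0 ≤ J e)
    (f : V → ℝ) :
    ((∑ σ : V → Bool, FK.isingProb J (fun _ => 0) E σ *
        Real.exp (∑ v, f v * FK.spin (σ v)))
      = ∑ ωi : FK.Config E, FK.rcProb J E ωi *
          ∏ C ∈ FK.clusters E ωi, Real.cosh (∑ v ∈ C, f v)) ∧
    ((∀ v, 0 ≤ f v) →
      (1 ≤ ∑ σ : V → Bool, FK.isingProb J (fun _ => 0) E σ *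
            Real.exp (∑ v, f v * FK.spin (σ v))) ∧
      (1 ≤ ∑ ωi : FK.Config E, FK.rcProb J E ωi *
            ∏ C ∈ FK.clusters E ωi, Real.cosh (∑ v ∈ C, f v))) := by
  have hmgf := FK.sum_isingProb_mul_exp J E f
  have hone := FK.one_le_sum_rcProb_mul_prod_cosh hJ f
  exact ⟨hmgf, fun _ => ⟨hmgf ▸ hone, hone⟩⟩

/-- Edwards–Sokal moment generating function identity at zero field;
if `f ≥ 0`, both sides are at least `1`. -/
theorem edwards_sokal_mgf_identity
    {V : Type*} [Fintype V] [DecidableEq V]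
    (E : Finset (Sym2 V)) (hE : ∀ e ∈ E, ¬ e.IsDiag)
    (J : Sym2 V → ℝ) (hJ : ∀ e ∈ E, 0 ≤ J e)
    (f : V → ℝ) :
    ((∑ σ : V → Bool, FK.isingProb J (fun _ => 0) E σ *
        Real.exp (∑ v, f v * FK.spin (σ v)))
      = ∑ ωi : FK.Config E, FK.rcProb J E ωi *
          ∏ C ∈ FK.clusters E ωi, Real.cosh (∑ v ∈ C, f v)) ∧
    ((∀ v, 0 ≤ f v) →
      (1 ≤ ∑ σ : V → Bool, FK.isingProb J (fun _ => 0) E σ *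
            Real.exp (∑ v, f v * FK.spin (σ v))) ∧
      (1 ≤ ∑ ωi : FK.Config E, FK.rcProb J E ωi *
            ∏ C ∈ FK.clusters E ωi, Real.cosh (∑ v ∈ C, f v))) :=
  edwards_sokal_mgf_identity_general E J hJ f
end

section
/- Moment generating function bound for the largest cluster, zero field (finite-graph version of Proposition 3.4): assume V ≠ ∅; then for every t ≥ 0, E_{P̃_{J,0}}[ exp( t · max_{C a cluster of ω̃} |C| ) ] ≤ 2 · E_{P_{J,0}}[ exp( t · ∑_{v∈V} σ_v ) ]. -/
/-!
Edwards–Sokal coupling at zero field. The joint weight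
`∏ₑ (ωₑ ? 𝟙[σ agrees on e] pₑ : 1 - pₑ)`, with `pₑ = 1 - e^{-2Jₑ}`, has `ω`-marginal
proportional to the random-cluster measure and `σ`-marginal proportional to the Ising measure;
given `ω`, the spin `σ` is a uniform independent sign on each cluster. Hence, for fixed `ω`
with clusters of sizes `s_C`, the conditional mgf of `∑ σ_v` is `∏_C cosh (t s_C)`, which is at
least `cosh (t s_max) ≥ e^{t s_max} / 2` because `cosh ≥ 1`. Averaging over `ω` gives the bound.
-/

open scoped Classical

namespace FK

open Finset Real

variable {V : Type*}

theorem sum_exp_sum_mul_spin {ι : Type*} [Fintype ι] [DecidableEq ι] (x : ι → ℝ) :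
    ∑ f : ι → Bool, exp (∑ i, x i * spin (f i)) = ∏ i, 2 * cosh (x i) := by
  calc ∑ f : ι → Bool, exp (∑ i, x i * spin (f i))
      = ∑ f : ι → Bool, ∏ i, exp (x i * spin (f i)) := by simp_rw [exp_sum]
    _ = ∏ i, ∑ b, exp (x i * spin b) := (Fintype.prod_sum fun i b => exp (x i * spin b)).symm
    _ = ∏ i, 2 * cosh (x i) := prod_congr rfl fun i _ => by
      simp [spin, cosh_eq]
      ring

theorem exp_le_two_mul_prod_cosh {ι : Type*} [Fintype ι] (x : ι → ℝ) (i : ι) :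
    exp (x i) ≤ 2 * ∏ j, cosh (x j) := calc
  exp (x i) ≤ 2 * cosh (x i) := by rw [cosh_eq]; linarith [exp_pos (-x i)]
  _ ≤ 2 * ∏ j, cosh (x j) := by
    gcongr
    simpa using prod_le_prod_of_subset_of_one_le (subset_univ {i})
      (fun j _ => (cosh_pos (x j)).le) (fun j _ _ => one_le_cosh (x j))

def agree (σ : V → Bool) (e : Sym2 V) : Prop := ∀ u ∈ e, ∀ v ∈ e, σ u = σ v

theorem agree_mk {σ : V → Bool} {a b : V} : agree σ s(a, b) ↔ σ a = σ b := by
  simp only [agree, Sym2.mem_iff, forall_eq_or_imp, forall_eq]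
  grind

theorem ite_agree_eq_exp_mul_exp (J : ℝ) (σ : V → Bool) (e : Sym2 V) :
    (if agree σ e then 1 else exp (-2 * J)) = exp (-J) * exp (J * pairSpin σ e) := by
  induction e using Sym2.inductionOn with
  | hf a b =>
    rw [← exp_add]
    cases ha : σ a <;> cases hb : σ b <;> simp [agree_mk, pairSpin, spin, ha, hb] <;> ring_nf

/-- The zero-field Edwards–Sokal weight, i.e. `esWeight J 0 E (σ, ω, fun _ => false)` with the
trivial ghost factor dropped. -/
noncomputable def esWeightZero (J : Sym2 V → ℝ) (E : Finset (Sym2 V)) (ω : Config E)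
    (σ : V → Bool) : ℝ :=
  ∏ e : {e : Sym2 V // e ∈ E},
    if ω e then (if agree σ e.1 then 1 - exp (-2 * J e.1) else 0) else exp (-2 * J e.1)

theorem sum_esWeightZero_eq_isingWeight [Fintype V] [DecidableEq V] (J : Sym2 V → ℝ)
    (E : Finset (Sym2 V)) (σ : V → Bool) :
    ∑ ω : Config E, esWeightZero J E ω σ
      = exp (-∑ e ∈ E, J e) * isingWeight J (fun _ => 0) E σ := by
  have bond_sum (e : {e : Sym2 V // e ∈ E}) :
      ∑ b : Bool, (if b then (if agree σ e.1 then 1 - exp (-2 * J e.1) else 0)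
        else exp (-2 * J e.1)) = exp (-J e) * exp (J e * pairSpin σ e) := by
    rw [← ite_agree_eq_exp_mul_exp]
    by_cases h : agree σ e.1 <;> simp [h]
  calc ∑ ω : Config E, esWeightZero J E ω σ
      = ∏ e : {e : Sym2 V // e ∈ E}, ∑ b : Bool,
          (if b then (if agree σ e.1 then 1 - exp (-2 * J e.1) else 0) else exp (-2 * J e.1)) :=
        (Fintype.prod_sum fun (e : {e : Sym2 V // e ∈ E}) (b : Bool) =>
          if b then (if agree σ e.1 then 1 - exp (-2 * J e.1) else 0) else exp (-2 * J e.1)).symm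
    _ = exp (-∑ e ∈ E, J e) * isingWeight J (fun _ => 0) E σ := by
      simp_rw [bond_sum, prod_mul_distrib, ← exp_sum]
      rw [sum_coe_sort E (fun e => -J e), sum_coe_sort E (fun e => J e * pairSpin σ e),
        sum_neg_distrib, isingWeight]
      simp

theorem edgeWeight_nonneg {J : Sym2 V → ℝ} {E : Finset (Sym2 V)} (hJ : ∀ e ∈ E, 0 ≤ J e)
    (ω : Config E) : 0 ≤ edgeWeight J E ω :=
  prod_nonneg fun e _ => by
    have : exp (-2 * J e) ≤ 1 := exp_le_one_iff.2 (by linarith [hJ e e.2])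
    split_ifs <;> linarith [exp_pos (-2 * J e)]

theorem sum_ite_le_ker_eq_sum_comp_mk {α β M : Type*} [Fintype α] [DecidableEq α] [Fintype β]
    [AddCommMonoid M] (r : Setoid α) (g : (α → β) → M) :
    ∑ σ : α → β, (if r ≤ Setoid.ker σ then g σ else 0)
      = ∑ f : Quotient r → β, g (f ∘ Quotient.mk r) := by
  rw [← sum_filter, sum_subtype _ fun σ => mem_filter_univ σ]
  exact Fintype.sum_equiv (Setoid.liftEquiv r) _ _ fun σ => rfl

section ClusterRelation

variable (E : Finset (Sym2 V)) (ω : Config E)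

instance : Std.Symm (adj E ω) where
  symm u v := fun ⟨hne, he, hopen⟩ =>
    ⟨hne.symm, Sym2.eq_swap (a := u) ▸ he, by simpa only [Sym2.eq_swap] using hopen⟩

instance : Std.Symm (conn E ω) := inferInstanceAs (Std.Symm (Relation.ReflTransGen (adj E ω)))

def clusterSetoid : Setoid V where
  r := conn E ω
  iseqv := ⟨fun _ => .refl, fun h => Std.Symm.symm _ _ h, .trans⟩

abbrev ClusterIndex : Type _ := Quotient (clusterSetoid E ω)

theorem clusterSetoid_le_ker_iff {σ : V → Bool} : clusterSetoid E ω ≤ Setoid.ker σ ↔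
    ∀ e : {e : Sym2 V // e ∈ E}, ω e = true → agree σ e.1 := by
  simp only [Setoid.le_def, Setoid.ker_def]
  constructor
  · rintro h ⟨e, he⟩ hopen
    induction e using Sym2.inductionOn with | hf a b =>
    refine agree_mk.2 ?_
    by_cases hab : a = b
    · rw [hab]
    · exact h (Relation.ReflTransGen.single ⟨hab, he, hopen⟩)
  · intro h u v huv
    induction huv with
    | refl => rfl
    | tail _ hadj ih =>
      obtain ⟨-, he, hopen⟩ := hadj
      exact ih.trans (agree_mk.1 (h ⟨_, he⟩ hopen))

theorem esWeightZero_eq (J : Sym2 V → ℝ) (σ : V → Bool) :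
    esWeightZero J E ω σ = if clusterSetoid E ω ≤ Setoid.ker σ then edgeWeight J E ω else 0 := by
  split_ifs with h
  · refine prod_congr rfl fun e _ => ?_
    by_cases hopen : ω e <;> simp [hopen, (clusterSetoid_le_ker_iff E ω).1 h e]
  · obtain ⟨e, hopen, hdisagree⟩ : ∃ e, ω e = true ∧ ¬ agree σ e.1 := by
      simpa [clusterSetoid_le_ker_iff] using h
    exact prod_eq_zero (mem_univ e) (by simp [hopen, hdisagree])

end ClusterRelation

section Clusters

variable [Fintype V] (E : Finset (Sym2 V)) (ω : Config E)

noncomputable def clusterOf (q : ClusterIndex E ω) : Finset V := {v | ⟦v⟧ = q}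

theorem cluster_eq_clusterOf_mk (v : V) : cluster E ω v = clusterOf E ω ⟦v⟧ := by
  ext u
  simp only [cluster, clusterOf, mem_filter, mem_univ, true_and, Quotient.eq]
  exact ⟨fun h => Std.Symm.symm _ _ h, fun h => Std.Symm.symm _ _ h⟩

theorem clusterOf_injective : Function.Injective (clusterOf E ω) := by
  intro q q' h
  induction q using Quotient.inductionOn with | h v =>
  have hv : v ∈ clusterOf E ω ⟦v⟧ := by simp [clusterOf]
  rw [h] at hv
  simpa [clusterOf] using hv

theorem sum_spin_comp_mk (f : ClusterIndex E ω → Bool) :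
    ∑ v, spin (f ⟦v⟧) = ∑ q, #(clusterOf E ω q) * spin (f q) := by
  rw [← sum_fiberwise univ (fun v => (⟦v⟧ : ClusterIndex E ω))]
  refine sum_congr rfl fun q _ => ?_
  rw [sum_congr rfl fun v hv => by rw [(mem_filter.1 hv).2], sum_const, nsmul_eq_mul]
  rfl

section Decidable

variable [DecidableEq V]

theorem clusters_eq_image_clusterOf : clusters E ω = univ.image (clusterOf E ω) := by
  have : univ.image (fun v : V => (⟦v⟧ : ClusterIndex E ω)) = univ :=
    image_univ_of_surjective Quotient.mk_surjective
  rw [clusters, ← this, image_image]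
  exact image_congr fun v _ => cluster_eq_clusterOf_mk E ω v

theorem card_clusters : #(clusters E ω) = Fintype.card (ClusterIndex E ω) := by
  rw [clusters_eq_image_clusterOf, card_image_of_injective _ (clusterOf_injective E ω), card_univ]

theorem sup_card_clusters :
    (clusters E ω).sup card = univ.sup fun q => #(clusterOf E ω q) := by
  rw [clusters_eq_image_clusterOf, sup_image]
  rfl

theorem exp_mul_sup_card_clusters_le (t : ℝ) :
    exp (t * (clusters E ω).sup card)
      ≤ 2 * ∏ q : ClusterIndex E ω, cosh (t * #(clusterOf E ω q)) := by
  rcases isEmpty_or_nonempty (ClusterIndex E ω) with hempty | hnonempty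
  · simp [sup_card_clusters, univ_eq_empty]
  · obtain ⟨q, -, hq⟩ := exists_mem_eq_sup univ univ_nonempty fun q => #(clusterOf E ω q)
    rw [sup_card_clusters, hq]
    exact exp_le_two_mul_prod_cosh (fun q => t * #(clusterOf E ω q)) q

theorem sum_esWeightZero_mul_exp (J : Sym2 V → ℝ) (t : ℝ) :
    ∑ σ : V → Bool, esWeightZero J E ω σ * exp (t * ∑ v, spin (σ v))
      = edgeWeight J E ω * ∏ q : ClusterIndex E ω, 2 * cosh (t * #(clusterOf E ω q)) := by
  simp_rw [esWeightZero_eq, ite_mul, zero_mul]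
  rw [sum_ite_le_ker_eq_sum_comp_mk, ← sum_exp_sum_mul_spin, mul_sum]
  refine sum_congr rfl fun f _ => ?_
  simp only [Function.comp_apply, sum_spin_comp_mk, mul_sum, mul_assoc]

theorem sum_esWeightZero_eq_rcWeight (J : Sym2 V → ℝ) :
    ∑ σ : V → Bool, esWeightZero J E ω σ = rcWeight J E ω := by
  simpa [rcWeight, card_clusters, mul_comm] using sum_esWeightZero_mul_exp E ω J 0

theorem rcWeight_mul_exp_le {J : Sym2 V → ℝ} (hJ : ∀ e ∈ E, 0 ≤ J e) (t : ℝ) :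
    rcWeight J E ω * exp (t * (clusters E ω).sup card)
      ≤ 2 * ∑ σ : V → Bool, esWeightZero J E ω σ * exp (t * ∑ v, spin (σ v)) := by
  rw [sum_esWeightZero_mul_exp, rcWeight, card_clusters, prod_mul_distrib, prod_const, card_univ]
  have hw : 0 ≤ 2 ^ Fintype.card (ClusterIndex E ω) * edgeWeight J E ω :=
    mul_nonneg (pow_nonneg zero_le_two _) (edgeWeight_nonneg hJ ω)
  calc _ ≤ 2 ^ Fintype.card (ClusterIndex E ω) * edgeWeight J E ω
        * (2 * ∏ q, cosh (t * #(clusterOf E ω q))) :=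
        mul_le_mul_of_nonneg_left (exp_mul_sup_card_clusters_le E ω t) hw
    _ = _ := by ring

end Decidable

end Clusters

section Coupling

variable [Fintype V] [DecidableEq V] (E : Finset (Sym2 V)) (J : Sym2 V → ℝ)

theorem sum_rcWeight_eq :
    ∑ ω, rcWeight J E ω = exp (-∑ e ∈ E, J e) * ∑ σ, isingWeight J (fun _ => 0) E σ := by
  simp_rw [← sum_esWeightZero_eq_rcWeight]
  rw [sum_comm, mul_sum]
  simp_rw [sum_esWeightZero_eq_isingWeight]

theorem sum_rcWeight_mul_exp_le (hJ : ∀ e ∈ E, 0 ≤ J e) (t : ℝ) :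
    ∑ ω, rcWeight J E ω * exp (t * (clusters E ω).sup card)
      ≤ 2 * exp (-∑ e ∈ E, J e) *
          ∑ σ, isingWeight J (fun _ => 0) E σ * exp (t * ∑ v, spin (σ v)) := calc
  _ ≤ ∑ ω, 2 * ∑ σ : V → Bool, esWeightZero J E ω σ * exp (t * ∑ v, spin (σ v)) :=
    sum_le_sum fun ω _ => rcWeight_mul_exp_le E ω hJ t
  _ = 2 * ∑ σ : V → Bool, (∑ ω, esWeightZero J E ω σ) * exp (t * ∑ v, spin (σ v)) := by
    rw [← mul_sum, sum_comm]
    simp_rw [sum_mul]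
  _ = _ := by simp_rw [sum_esWeightZero_eq_isingWeight, mul_sum, mul_assoc]

end Coupling

end FK

theorem mgf_largest_cluster_zero_field_general
    {V : Type*} [Fintype V] [DecidableEq V]
    (E : Finset (Sym2 V))
    (J : Sym2 V → ℝ) (hJ : ∀ e ∈ E, 0 ≤ J e)
    (t : ℝ) :
    (∑ ωi : FK.Config E, FK.rcProb J E ωi *
        Real.exp (t * (((FK.clusters E ωi).sup Finset.card : ℕ) : ℝ)))
      ≤ 2 * ∑ σ : V → Bool, FK.isingProb J (fun _ => 0) E σ *
            Real.exp (t * ∑ v, FK.spin (σ v)) := by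
  have hZ : 0 < ∑ σ : V → Bool, FK.isingWeight J (fun _ => 0) E σ :=
    Finset.sum_pos (fun σ _ => Real.exp_pos _) Finset.univ_nonempty
  simp only [FK.rcProb, FK.isingProb, div_mul_eq_mul_div, ← Finset.sum_div, FK.sum_rcWeight_eq]
  rw [div_le_iff₀ (by positivity)]
  calc _ ≤ _ := FK.sum_rcWeight_mul_exp_le E J hJ t
    _ = _ := by field_simp

/-- moment generating function bound for the largest cluster, zero field. -/
theorem mgf_largest_cluster_zero_field
    {V : Type*} [Fintype V] [DecidableEq V] [Nonempty V]
    (E : Finset (Sym2 V)) (hE : ∀ e ∈ E, ¬ e.IsDiag)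
    (J : Sym2 V → ℝ) (hJ : ∀ e ∈ E, 0 ≤ J e)
    (t : ℝ) (ht : 0 ≤ t) :
    (∑ ωi : FK.Config E, FK.rcProb J E ωi *
        Real.exp (t * (((FK.clusters E ωi).sup Finset.card : ℕ) : ℝ)))
      ≤ 2 * ∑ σ : V → Bool, FK.isingProb J (fun _ => 0) E σ *
            Real.exp (t * ∑ v, FK.spin (σ v)) :=
  mgf_largest_cluster_zero_field_general E J hJ t
end
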